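/- Soundness of the type equality algorithm: if the judgment V; C; · ⊢ A ≡ B is derivable by the algorithmic rules, then ∀V. C ⇒ A ≡ B, i.e., for every ground substitution σ over V with ⊨ C[σ], the closed types A[σ] and B[σ] are related by some type bisimulation. -/

import Mathlib

/-!
The ground instances of conclusions of derivations, together with the diagonal, form a
type bisimulation. Structural rules make one step of the bisimulation game at once, each
premise being again a derivation. For type variables, contractiveness of the signature
means that one unfolding yields a structural type, whose step is supplied by the premise
of the expand rule or, for the def rule, by the derivation with which an earlier expand rule
recorded the closure in the context.
-/

/-- Closed arithmetically refined session types: internal/external choice over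
finite label sets (labels are naturals), tensor, lolli, unit, assertions ?{φ}A,
assumptions !{φ}A, existential and universal quantification over naturals
(represented as families of types), and indexed type variables V[ē] with a
list of (closed) natural-number indices. -/
inductive RTy : Type 1 where
  | ichoice (L : Finset ℕ) (f : ℕ → RTy)
  | echoice (L : Finset ℕ) (f : ℕ → RTy)
  | tensor (A B : RTy)
  | lolli (A B : RTy)
  | one
  | assrt (φ : Prop) (A : RTy)   -- ?{φ}. A
  | assum (φ : Prop) (A : RTy)   -- !{φ}. A
  | exi (f : ℕ → RTy)            -- ∃n. A
  | all (f : ℕ → RTy)            -- ∀n. A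
  | var (v : ℕ) (es : List ℕ)    -- V[ē]

/-- A signature assigns to each indexed type variable and each list of indices
the (instantiated) defining type. -/
abbrev Sig := ℕ → List ℕ → RTy

/-- One-step unfolding of indexed type definitions. -/
def unfoldT (Sg : Sig) : RTy → RTy
  | .var v es => Sg v es
  | A => A

/-- One step of the bisimulation game on closed refined session types. -/
def RStep (R : RTy → RTy → Prop) : RTy → RTy → Prop
  | .ichoice L f, .ichoice L' g => L = L' ∧ ∀ ℓ ∈ L, R (f ℓ) (g ℓ)
  | .echoice L f, .echoice L' g => L = L' ∧ ∀ ℓ ∈ L, R (f ℓ) (g ℓ)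
  | .tensor A₁ A₂, .tensor B₁ B₂ => R A₁ B₁ ∧ R A₂ B₂
  | .lolli A₁ A₂, .lolli B₁ B₂ => R A₁ B₁ ∧ R A₂ B₂
  | .one, .one => True
  | .assrt φ A, .assrt ψ B => (φ ∧ ψ ∧ R A B) ∨ (¬φ ∧ ¬ψ)
  | .assum φ A, .assum ψ B => (φ ∧ ψ ∧ R A B) ∨ (¬φ ∧ ¬ψ)
  | .exi f, .exi g => ∀ i : ℕ, R (f i) (g i)
  | .all f, .all g => ∀ i : ℕ, R (f i) (g i)
  | _, _ => False

/-- `R` is a type bisimulation on closed refined session types. -/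
def IsBisim (Sg : Sig) (R : RTy → RTy → Prop) : Prop :=
  ∀ A B, R A B → RStep R (unfoldT Sg A) (unfoldT Sg B)

/-- Type equality A ≡ B: some type bisimulation relates A and B. -/
def REq (Sg : Sig) (A B : RTy) : Prop :=
  ∃ R, IsBisim Sg R ∧ R A B

/-! The algorithmic type equality judgment V; C; Γ ⊢ A ≡ B.  Arithmetic
variables are drawn from ℕ; a ground substitution is σ : ℕ → ℕ.  Open types
(types with free arithmetic variables) are represented as families of closed
types indexed by ground substitutions, open index expressions as functions
(ℕ → ℕ) → ℕ, and open constraints as predicates on substitutions. -/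

/-- A closure ⟨V'; C' ⊢ V₁[ē₁'] ≡ V₂[ē₂']⟩. -/
structure Closure : Type 1 where
  C : (ℕ → ℕ) → Prop
  V₁ : ℕ
  V₂ : ℕ
  e₁ : List ((ℕ → ℕ) → ℕ)
  e₂ : List ((ℕ → ℕ) → ℕ)

/-- Instantiating a list of open index expressions by a ground substitution. -/
def instL (e : List ((ℕ → ℕ) → ℕ)) (σ : ℕ → ℕ) : List ℕ := e.map (fun x => x σ)

/-- The algorithmic rules: structural decomposition for ⊕, &, ⊗, ⊸, 1;
assertion/assumption rules requiring C ⊨ φ ↔ ψ and continuing with C ∧ φ;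
quantifier rules introducing a fresh variable k (freshness of k w.r.t. C is
expressed by C being invariant under updating k); a ⊥ rule; reflexivity for
equal type variables with provably equal indices; the expand rule unfolding
both definitions while recording the closure in Γ; and the def rule closing a
branch when all instances of the goal are instances of a recorded closure. -/
inductive Alg (Sg : Sig) :
    ((ℕ → ℕ) → Prop) → Set Closure → ((ℕ → ℕ) → RTy) → ((ℕ → ℕ) → RTy) → Prop where
  | ichoice {C Γ} {L : Finset ℕ} {f g : ℕ → (ℕ → ℕ) → RTy} :
      (∀ ℓ ∈ L, Alg Sg C Γ (f ℓ) (g ℓ)) →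
      Alg Sg C Γ (fun σ => .ichoice L (fun ℓ => f ℓ σ))
                 (fun σ => .ichoice L (fun ℓ => g ℓ σ))
  | echoice {C Γ} {L : Finset ℕ} {f g : ℕ → (ℕ → ℕ) → RTy} :
      (∀ ℓ ∈ L, Alg Sg C Γ (f ℓ) (g ℓ)) →
      Alg Sg C Γ (fun σ => .echoice L (fun ℓ => f ℓ σ))
                 (fun σ => .echoice L (fun ℓ => g ℓ σ))
  | tensor {C Γ A₁ A₂ B₁ B₂} :
      Alg Sg C Γ A₁ B₁ → Alg Sg C Γ A₂ B₂ →
      Alg Sg C Γ (fun σ => .tensor (A₁ σ) (A₂ σ)) (fun σ => .tensor (B₁ σ) (B₂ σ))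
  | lolli {C Γ A₁ A₂ B₁ B₂} :
      Alg Sg C Γ A₁ B₁ → Alg Sg C Γ A₂ B₂ →
      Alg Sg C Γ (fun σ => .lolli (A₁ σ) (A₂ σ)) (fun σ => .lolli (B₁ σ) (B₂ σ))
  | one {C Γ} : Alg Sg C Γ (fun _ => .one) (fun _ => .one)
  | assrt {C Γ} {φ ψ : (ℕ → ℕ) → Prop} {A B} :
      (∀ σ, C σ → (φ σ ↔ ψ σ)) →
      Alg Sg (fun σ => C σ ∧ φ σ) Γ A B →
      Alg Sg C Γ (fun σ => .assrt (φ σ) (A σ)) (fun σ => .assrt (ψ σ) (B σ))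
  | assum {C Γ} {φ ψ : (ℕ → ℕ) → Prop} {A B} :
      (∀ σ, C σ → (φ σ ↔ ψ σ)) →
      Alg Sg (fun σ => C σ ∧ φ σ) Γ A B →
      Alg Sg C Γ (fun σ => .assum (φ σ) (A σ)) (fun σ => .assum (ψ σ) (B σ))
  | exi {C Γ} {k : ℕ} {A B : (ℕ → ℕ) → RTy} :
      (∀ σ i, C σ → C (Function.update σ k i)) →   -- k fresh for C
      Alg Sg C Γ A B →
      Alg Sg C Γ (fun σ => .exi (fun i => A (Function.update σ k i)))
                 (fun σ => .exi (fun i => B (Function.update σ k i)))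
  | all {C Γ} {k : ℕ} {A B : (ℕ → ℕ) → RTy} :
      (∀ σ i, C σ → C (Function.update σ k i)) →
      Alg Sg C Γ A B →
      Alg Sg C Γ (fun σ => .all (fun i => A (Function.update σ k i)))
                 (fun σ => .all (fun i => B (Function.update σ k i)))
  | bot {C Γ A B} : (∀ σ, ¬ C σ) → Alg Sg C Γ A B
  | refl {C Γ V} {e e' : List ((ℕ → ℕ) → ℕ)} :
      (∀ σ, C σ → instL e σ = instL e' σ) →
      Alg Sg C Γ (fun σ => .var V (instL e σ)) (fun σ => .var V (instL e' σ))
  | expd {C Γ V₁ V₂} {e₁ e₂ : List ((ℕ → ℕ) → ℕ)} :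
      Alg Sg C (insert ⟨C, V₁, V₂, e₁, e₂⟩ Γ)
        (fun σ => Sg V₁ (instL e₁ σ)) (fun σ => Sg V₂ (instL e₂ σ)) →
      Alg Sg C Γ (fun σ => .var V₁ (instL e₁ σ)) (fun σ => .var V₂ (instL e₂ σ))
  | tdef {C Γ V₁ V₂} {e₁ e₂ : List ((ℕ → ℕ) → ℕ)} {cl : Closure} :
      cl ∈ Γ → cl.V₁ = V₁ → cl.V₂ = V₂ →
      (∀ σ, C σ → ∃ σ', cl.C σ' ∧ instL cl.e₁ σ' = instL e₁ σ ∧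
        instL cl.e₂ σ' = instL e₂ σ) →
      Alg Sg C Γ (fun σ => .var V₁ (instL e₁ σ)) (fun σ => .var V₂ (instL e₂ σ))

inductive Justified (Sg : Sig) : Set Closure → Prop
  | empty : Justified Sg ∅
  | cons {Γ : Set Closure} {cl : Closure} : Justified Sg Γ →
      Alg Sg cl.C (insert cl Γ)
        (fun σ => Sg cl.V₁ (instL cl.e₁ σ)) (fun σ => Sg cl.V₂ (instL cl.e₂ σ)) →
      Justified Sg (insert cl Γ)

theorem Justified.exists_alg_of_mem {Sg : Sig} {Γ : Set Closure} (hΓ : Justified Sg Γ)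
    {cl : Closure} (hcl : cl ∈ Γ) :
    ∃ Γ', Justified Sg (insert cl Γ') ∧
      Alg Sg cl.C (insert cl Γ')
        (fun σ => Sg cl.V₁ (instL cl.e₁ σ)) (fun σ => Sg cl.V₂ (instL cl.e₂ σ)) := by
  induction hΓ with
  | empty => exact absurd hcl (Set.notMem_empty cl)
  | @cons Γ cl' hΓ d ih =>
      rcases hcl with rfl | hcl
      · exact ⟨Γ, hΓ.cons d, d⟩
      · exact ih hcl

def AlgInst (Sg : Sig) (X Y : RTy) : Prop :=
  ∃ C Γ A B σ, Alg Sg C Γ A B ∧ Justified Sg Γ ∧ C σ ∧ X = A σ ∧ Y = B σ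

/-- The diagonal is needed for the reflexivity rule: the unfoldings of `V[ē] ≡ V[ē]` are
related by no derivation. -/
def AlgBisim (Sg : Sig) (X Y : RTy) : Prop := X = Y ∨ AlgInst Sg X Y

theorem algBisim_of_alg {Sg : Sig} {C : (ℕ → ℕ) → Prop} {Γ : Set Closure}
    {A B : (ℕ → ℕ) → RTy} (d : Alg Sg C Γ A B) (hΓ : Justified Sg Γ) {σ : ℕ → ℕ}
    (hσ : C σ) : AlgBisim Sg (A σ) (B σ) :=
  Or.inr ⟨C, Γ, A, B, σ, d, hΓ, hσ, rfl, rfl⟩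

theorem rStep_self {R : RTy → RTy → Prop} (hR : ∀ X, R X X) {Z : RTy}
    (hZ : ∀ v es, Z ≠ .var v es) : RStep R Z Z := by
  cases Z with
  | ichoice | echoice => exact ⟨rfl, fun ℓ _ => hR _⟩
  | tensor | lolli => exact ⟨hR _, hR _⟩
  | one => trivial
  | assrt φ | assum φ => exact (em φ).imp (fun hφ => ⟨hφ, hφ, hR _⟩) fun hφ => ⟨hφ, hφ⟩
  | exi | all => exact fun _ => hR _
  | var v es => exact absurd rfl (hZ v es)

theorem unfoldT_of_ne_var {Sg : Sig} {X : RTy} (hX : ∀ v es, X ≠ .var v es) :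
    unfoldT Sg X = X := by
  cases X <;> first | rfl | exact absurd rfl (hX _ _)

theorem unfoldT_ne_var {Sg : Sig} (hc : ∀ v es w es', Sg v es ≠ RTy.var w es') (X : RTy)
    (v : ℕ) (es : List ℕ) : unfoldT Sg X ≠ .var v es := by
  cases X
  case var w es' => exact hc w es' v es
  all_goals exact RTy.noConfusion

namespace Alg

variable {Sg : Sig} {C : (ℕ → ℕ) → Prop} {Γ : Set Closure} {A B : (ℕ → ℕ) → RTy}
  {σ : ℕ → ℕ}

theorem rStep_of_ne_var (d : Alg Sg C Γ A B) (hΓ : Justified Sg Γ) (hσ : C σ)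
    (hA : ∀ v es, A σ ≠ .var v es) :
    RStep (AlgBisim Sg) (unfoldT Sg (A σ)) (unfoldT Sg (B σ)) := by
  cases d with
  | ichoice h | echoice h => exact ⟨rfl, fun ℓ hℓ => algBisim_of_alg (h ℓ hℓ) hΓ hσ⟩
  | tensor h₁ h₂ | lolli h₁ h₂ => exact ⟨algBisim_of_alg h₁ hΓ hσ, algBisim_of_alg h₂ hΓ hσ⟩
  | one => trivial
  | @assrt _ _ φ _ _ _ hφψ d | @assum _ _ φ _ _ _ hφψ d =>
      by_cases hφ : φ σ
      · exact .inl ⟨hφ, (hφψ σ hσ).1 hφ, algBisim_of_alg d hΓ (show _ ∧ _ from ⟨hσ, hφ⟩)⟩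
      · exact .inr ⟨hφ, mt (hφψ σ hσ).2 hφ⟩
  | exi hk d | all hk d => exact fun i => algBisim_of_alg d hΓ (hk σ i hσ)
  | bot h => exact absurd hσ (h σ)
  | refl | expd | tdef => exact absurd rfl (hA _ _)

theorem rStep_unfoldT (hc : ∀ v es w es', Sg v es ≠ RTy.var w es') (d : Alg Sg C Γ A B)
    (hΓ : Justified Sg Γ) (hσ : C σ) :
    RStep (AlgBisim Sg) (unfoldT Sg (A σ)) (unfoldT Sg (B σ)) := by
  by_cases hA : ∀ v es, A σ ≠ .var v es
  · exact d.rStep_of_ne_var hΓ hσ hA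
  cases d with
  | bot h => exact absurd hσ (h σ)
  | refl he =>
      change RStep _ (unfoldT Sg (.var _ _)) _
      rw [he σ hσ]
      exact rStep_self (fun _ => .inl rfl) (unfoldT_ne_var hc _)
  | expd d =>
      have h := d.rStep_of_ne_var (hΓ.cons d) hσ (hc _ _)
      rwa [unfoldT_of_ne_var (hc _ _), unfoldT_of_ne_var (hc _ _)] at h
  | tdef hcl hV₁ hV₂ hinst =>
      obtain ⟨σ', hσ', he₁, he₂⟩ := hinst σ hσ
      obtain ⟨Γ', hΓ', d⟩ := hΓ.exists_alg_of_mem hcl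
      have h := d.rStep_of_ne_var hΓ' hσ' (hc _ _)
      subst hV₁ hV₂
      rwa [unfoldT_of_ne_var (hc _ _), unfoldT_of_ne_var (hc _ _), he₁, he₂] at h
  | _ => exact absurd (fun _ _ => RTy.noConfusion) hA

end Alg

theorem isBisim_algBisim {Sg : Sig} (hc : ∀ v es w es', Sg v es ≠ RTy.var w es') :
    IsBisim Sg (AlgBisim Sg) := by
  rintro X _ (rfl | ⟨C, Γ, A, B, σ, d, hΓ, hσ, rfl, rfl⟩)
  · exact rStep_self (fun _ => .inl rfl) (unfoldT_ne_var hc X)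
  · exact d.rStep_unfoldT hc hΓ hσ

/-- soundness of the type equality algorithm: for a contractive
(valid) signature, if V; C; · ⊢ A ≡ B is derivable then ∀V. C ⇒ A ≡ B: every
ground instance of A and B (under a substitution satisfying C) is related by
some type bisimulation. -/
theorem alg_sound (Sg : Sig) (hc : ∀ v es w es', Sg v es ≠ RTy.var w es')
    (C : (ℕ → ℕ) → Prop) (A B : (ℕ → ℕ) → RTy)
    (h : Alg Sg C ∅ A B) :
    ∀ σ : ℕ → ℕ, C σ → REq Sg (A σ) (B σ) :=
  fun _ hσ => ⟨AlgBisim Sg, isBisim_algBisim hc, algBisim_of_alg h .empty hσ⟩
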